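/- For every integer n ≥ 5, Left wins the Forbidden Leaf Variant of the Mixed Deletion Game on the complete graph K_n regardless of which player moves first. -/

import Mathlib

universe u

namespace SetTheory

/-- Pre-games, as in the older Mathlib `SetTheory.PGame` (removed from Mathlib since). -/
inductive PGame : Type (u + 1)
  | mk : ∀ α β : Type u, (α → PGame) → (β → PGame) → PGame

namespace PGame

/-- `x` is an immediate option of `y`. -/
inductive IsOption : PGame.{u} → PGame.{u} → Prop
  | moveLeft {l r : Type u} (L : l → PGame.{u}) (R : r → PGame.{u}) (i : l) :
      IsOption (L i) (mk l r L R)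
  | moveRight {l r : Type u} (L : l → PGame.{u}) (R : r → PGame.{u}) (j : r) :
      IsOption (R j) (mk l r L R)

theorem wf_isOption : WellFounded IsOption.{u} :=
  ⟨fun x => by
    induction x with
    | mk l r L R ihL ihR =>
      exact Acc.intro _ (fun y h => by
        cases h with
        | moveLeft _ _ i => exact ihL i
        | moveRight _ _ j => exact ihR j)⟩

instance : WellFoundedRelation PGame.{u} := ⟨IsOption, wf_isOption⟩

instance : Zero PGame.{u} := ⟨mk PEmpty PEmpty PEmpty.elim PEmpty.elim⟩

instance : One PGame.{u} := ⟨mk PUnit PEmpty (fun _ => 0) PEmpty.elim⟩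

/-- Negation of pre-games. -/
def neg : PGame.{u} → PGame.{u}
  | mk l r L R => mk r l (fun i => neg (R i)) (fun i => neg (L i))

instance : Neg PGame.{u} := ⟨neg⟩

/-- Sum of pre-games. -/
def add : PGame.{u} → PGame.{u} → PGame.{u}
  | mk xl xr xL xR, mk yl yr yL yR =>
    mk (xl ⊕ yl) (xr ⊕ yr)
      (Sum.elim (fun i => add (xL i) (mk yl yr yL yR)) (fun i => add (mk xl xr xL xR) (yL i)))
      (Sum.elim (fun i => add (xR i) (mk yl yr yL yR)) (fun i => add (mk xl xr xL xR) (yR i)))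
  termination_by x y => (x, y)
  decreasing_by
  · exact Prod.Lex.left _ _ (IsOption.moveLeft _ _ _)
  · exact Prod.Lex.right _ (IsOption.moveLeft _ _ _)
  · exact Prod.Lex.left _ _ (IsOption.moveRight _ _ _)
  · exact Prod.Lex.right _ (IsOption.moveRight _ _ _)

instance : Add PGame.{u} := ⟨add⟩

/-- The pair (`x ≤ y`, `x ⧏ y`), defined by simultaneous recursion:
`x ≤ y ↔ (∀ i, xL i ⧏ y) ∧ (∀ j, x ⧏ yR j)` and
`x ⧏ y ↔ (∃ i, x ≤ yL i) ∨ (∃ j, xR j ≤ y)`. -/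
noncomputable def leLF (x : PGame.{u}) : PGame.{u} → Prop × Prop :=
  PGame.rec (motive := fun _ => PGame.{u} → Prop × Prop)
    (fun _ _ _ _ ihL ihR y =>
      PGame.rec (motive := fun _ => Prop × Prop)
        (fun _ _ _ _ jhL jhR =>
          ((∀ i, (ihL i y).2) ∧ ∀ j, (jhR j).2, (∃ i, (jhL i).1) ∨ ∃ j, (ihR j y).1)) y) x

instance : LE PGame.{u} := ⟨fun x y => (leLF x y).1⟩

/-- The less or fuzzy relation `x ⧏ y`, i.e. `¬ y ≤ x`. -/
def LF (x y : PGame.{u}) : Prop := ¬y ≤ x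

infixl:50 " ⧏ " => PGame.LF

instance : LT PGame.{u} := ⟨fun x y => x ≤ y ∧ x ⧏ y⟩

/-- The game star, `* = {0 | 0}`. -/
def star : PGame.{u} := mk PUnit PUnit (fun _ => 0) fun _ => 0

/-- The nim-heap of size `o`. -/
noncomputable def nim (o : Ordinal.{u}) : PGame.{u} :=
  mk o.ToType o.ToType (fun x => nim (Ordinal.typein (α := o.ToType) (· < ·) x))
    (fun x => nim (Ordinal.typein (α := o.ToType) (· < ·) x))
  termination_by o
  decreasing_by
  · exact Ordinal.typein_lt_self x
  · exact Ordinal.typein_lt_self x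

end PGame

end SetTheory

open SetTheory PGame

namespace MixedDeletion

/-- The degree of a vertex `v` with respect to an edge set `E`. -/
def deg (E : Finset (Sym2 ℕ)) (v : ℕ) : ℕ := (E.filter (fun e => v ∈ e)).card

/-- The graph position with vertex set `V` and edge set `E` has no isolated vertex. -/
def NoIsol (V : Finset ℕ) (E : Finset (Sym2 ℕ)) : Prop := ∀ v ∈ V, 0 < deg E v

/-- Result of Left deleting the vertex `v`: remove `v` and all incident edges. -/
def delV (V : Finset ℕ) (E : Finset (Sym2 ℕ)) (v : ℕ) : Finset ℕ × Finset (Sym2 ℕ) :=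
  (V.erase v, E.filter (fun e => v ∉ e))

/-- Left may legally delete vertex `v` under the base (Classic) rules:
`v` is a vertex and the deletion creates no isolated vertex. -/
def LeftOK (V : Finset ℕ) (E : Finset (Sym2 ℕ)) (v : ℕ) : Prop :=
  v ∈ V ∧ NoIsol (V.erase v) (E.filter (fun e => v ∉ e))

/-- Right may legally delete edge `e` under the base (Classic) rules:
`e` is an edge and the deletion creates no isolated vertex. -/
def RightOK (V : Finset ℕ) (E : Finset (Sym2 ℕ)) (e : Sym2 ℕ) : Prop :=
  e ∈ E ∧ NoIsol V (E.erase e)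

/-- The Classic Variant of the Mixed Deletion Game, as a partizan game:
Left deletes a vertex (and incident edges), Right deletes an edge,
and no move may create an isolated vertex. -/
def classicG : Finset ℕ → Finset (Sym2 ℕ) → PGame
  | V, E =>
    PGame.mk {v : ℕ // LeftOK V E v} {e : Sym2 ℕ // RightOK V E e}
      (fun x => classicG (V.erase x.val) (E.filter (fun e => x.val ∉ e)))
      (fun x => classicG V (E.erase x.val))
  termination_by V E => V.card + E.card
  decreasing_by
  · have h1 : (V.erase x.val).card < V.card := Finset.card_erase_lt_of_mem x.2.1
    have h2 : (E.filter (fun e => x.val ∉ e)).card ≤ E.card := Finset.card_filter_le _ _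
    omega
  · have h1 : (E.erase x.val).card < E.card := Finset.card_erase_lt_of_mem x.2.1
    omega

/-- The Forbidden Leaf Variant: as the Classic Variant, but Left may not
delete leaf vertices (vertices of degree one). -/
def flG : Finset ℕ → Finset (Sym2 ℕ) → PGame
  | V, E =>
    PGame.mk {v : ℕ // LeftOK V E v ∧ deg E v ≠ 1} {e : Sym2 ℕ // RightOK V E e}
      (fun x => flG (V.erase x.val) (E.filter (fun e => x.val ∉ e)))
      (fun x => flG V (E.erase x.val))
  termination_by V E => V.card + E.card
  decreasing_by
  · have h1 : (V.erase x.val).card < V.card := Finset.card_erase_lt_of_mem x.2.1.1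
    have h2 : (E.filter (fun e => x.val ∉ e)).card ≤ E.card := Finset.card_filter_le _ _
    omega
  · have h1 : (E.erase x.val).card < E.card := Finset.card_erase_lt_of_mem x.2.1
    omega

/-- The Mutual Failures Variant: as the Classic Variant, but in any graph
position a player has a legal move if and only if the opponent does; i.e. a
base-rules move is legal only if the opponent also has a base-rules move. -/
def mfG : Finset ℕ → Finset (Sym2 ℕ) → PGame
  | V, E =>
    PGame.mk {v : ℕ // LeftOK V E v ∧ ∃ e, RightOK V E e}
      {e : Sym2 ℕ // RightOK V E e ∧ ∃ v, LeftOK V E v}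
      (fun x => mfG (V.erase x.val) (E.filter (fun e => x.val ∉ e)))
      (fun x => mfG V (E.erase x.val))
  termination_by V E => V.card + E.card
  decreasing_by
  · have h1 : (V.erase x.val).card < V.card := Finset.card_erase_lt_of_mem x.2.1.1
    have h2 : (E.filter (fun e => x.val ∉ e)).card ≤ E.card := Finset.card_filter_le _ _
    omega
  · have h1 : (E.erase x.val).card < E.card := Finset.card_erase_lt_of_mem x.2.1.1
    omega

/-- Edge set of the path graph on vertices `0, 1, …, n-1`. -/
def pathE (n : ℕ) : Finset (Sym2 ℕ) := (Finset.range (n - 1)).image (fun i => s(i, i + 1))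

/-- Edge set of the cycle graph on vertices `0, 1, …, n-1`. -/
def cycleE (n : ℕ) : Finset (Sym2 ℕ) := (Finset.range n).image (fun i => s(i, (i + 1) % n))

/-- Edge set of the complete graph on vertices `0, 1, …, n-1`. -/
def completeE (n : ℕ) : Finset (Sym2 ℕ) := (Finset.range n).sym2.filter (fun e => ¬ e.IsDiag)

/-- The path position `P_n` in the Classic Variant. -/
def classicPath (n : ℕ) : PGame := classicG (Finset.range n) (pathE n)

/-- The cycle position `C_n` in the Classic Variant. -/
def classicCycle (n : ℕ) : PGame := classicG (Finset.range n) (cycleE n)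

/-- The complete graph position `K_n` in the Classic Variant. -/
def classicComplete (n : ℕ) : PGame := classicG (Finset.range n) (completeE n)

/-- The path position `P_n` in the Forbidden Leaf Variant. -/
def flPath (n : ℕ) : PGame := flG (Finset.range n) (pathE n)

/-- The cycle position `C_n` in the Forbidden Leaf Variant. -/
def flCycle (n : ℕ) : PGame := flG (Finset.range n) (cycleE n)

/-- The complete graph position `K_n` in the Forbidden Leaf Variant. -/
def flComplete (n : ℕ) : PGame := flG (Finset.range n) (completeE n)

/-- The path position `P_n` in the Mutual Failures Variant. -/
def mfPath (n : ℕ) : PGame := mfG (Finset.range n) (pathE n)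

/-- The cycle position `C_n` in the Mutual Failures Variant. -/
def mfCycle (n : ℕ) : PGame := mfG (Finset.range n) (cycleE n)

/-- The complete graph position `K_n` in the Mutual Failures Variant. -/
def mfComplete (n : ℕ) : PGame := mfG (Finset.range n) (completeE n)

/-- The partizan game equal to a natural number `n`. -/
def natPG : ℕ → PGame
  | 0 => 0
  | n + 1 => natPG n + 1

/-- The partizan game equal to an integer `z`. -/
def intPG (z : ℤ) : PGame := if 0 ≤ z then natPG z.toNat else -natPG (-z).toNat

/-- The game up, `↑ = {0 | *}`. -/
def up : PGame := PGame.mk PUnit PUnit (fun _ => 0) (fun _ => star)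

/-- The game down, `↓ = {* | 0}`. -/
def down : PGame := -up

/-- The sum of `n` copies of up. -/
def natUp : ℕ → PGame
  | 0 => 0
  | n + 1 => natUp n + up

/-- The game `z·↑`: `|z|` copies of up if `z ≥ 0`, and `|z|` copies of down otherwise. -/
def zUp (z : ℤ) : PGame := if 0 ≤ z then natUp z.toNat else -natUp (-z).toNat

/-- Two games have the same outcome: Left wins moving first in one iff in the other,
and Right wins moving first in one iff in the other. -/
def SameOutcome (A B : PGame) : Prop := (0 ⧏ A ↔ 0 ⧏ B) ∧ (A ⧏ 0 ↔ B ⧏ 0)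

/-- Far-star equivalence: `G + X + ✶` and `H + X + ✶` have the same outcome for
every game `X`, where `✶` (far star) is any nim-heap `*k` with `k ≥ 2`. -/
def FarStarEquiv (G H : PGame) : Prop :=
  ∀ (X : PGame) (k : ℕ), 2 ≤ k → SameOutcome (G + X + nim k) (H + X + nim k)

/-- `G` has atomic weight `z` if `G` is far-star equivalent to `z·↑`. -/
def AtomicWeight (G : PGame) (z : ℤ) : Prop := FarStarEquiv G (zUp z)

/-- A game is all-small if in every subposition Left has a move iff Right has a move. -/
def AllSmall : PGame → Prop
  | PGame.mk l r L R =>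
    (Nonempty l ↔ Nonempty r) ∧ (∀ i, AllSmall (L i)) ∧ (∀ j, AllSmall (R j))

end MixedDeletion

/-!
When Right deletes an edge of `K_n` with `n ≥ 5`, Left deletes one of its endpoints and is back at
`K_{n-1}`. In `K_4` Left instead deletes a vertex off the deleted edge; this leaves the path on
three vertices, in which each edge has a leaf endpoint, so Right has no legal move. Moving first on
`K_n`, Left deletes any vertex and becomes the second player on `K_{n-1}`.
-/

namespace SetTheory.PGame

/-- The inner recursion of `leLF x y`. Its clauses `A` and `B`, which depend on `x`, stay fixed at
the outer `y`, so `leLF` follows the usual recursive order only in comparisons with `0`, where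
`A` and `B` degenerate to `True` and `False`. -/
noncomputable def leLFAux (A B : Prop) : PGame.{u} → Prop × Prop :=
  PGame.rec (motive := fun _ => Prop × Prop)
    (fun _ _ _ _ ihL ihR => (A ∧ ∀ j, (ihR j).2, (∃ i, (ihL i).1) ∨ B))

variable {l r : Type u} {L : l → PGame.{u}} {R : r → PGame.{u}}

theorem zero_eq_mk : (0 : PGame.{u}) = mk PEmpty PEmpty PEmpty.elim PEmpty.elim :=
  rfl

theorem leLF_mk (y : PGame.{u}) :
    leLF (mk l r L R) y = leLFAux (∀ i, (leLF (L i) y).2) (∃ j, (leLF (R j) y).1) y :=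
  rfl

theorem leLFAux_mk (A B : Prop) :
    leLFAux A B (mk l r L R) = (A ∧ ∀ j, (leLFAux A B (R j)).2, (∃ i, (leLFAux A B (L i)).1) ∨ B) :=
  rfl

theorem leLF_zero_left (y : PGame.{u}) : leLF 0 y = leLFAux True False y := by
  simp [zero_eq_mk, leLF_mk]

theorem leLF_mk_zero :
    leLF (mk l r L R) 0 = (∀ i, (leLF (L i) 0).2, ∃ j, (leLF (R j) 0).1) := by
  simp [zero_eq_mk, leLF_mk, leLFAux_mk]

theorem leLFAux_true_false (w : PGame.{u}) :
    ((leLFAux True False w).1 ↔ ¬(leLF w 0).2) ∧ ((leLFAux True False w).2 ↔ ¬(leLF w 0).1) := by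
  induction w with
  | mk wl wr wL wR ihL ihR =>
  simp only [leLFAux_mk, leLF_mk_zero, true_and, or_false, not_forall, not_exists]
  exact ⟨forall_congr' fun j => (ihR j).2, exists_congr fun i => (ihL i).1⟩

theorem zero_le_mk : 0 ≤ mk l r L R ↔ ∀ j, 0 ⧏ R j := by
  show (leLF 0 (mk l r L R)).1 ↔ ∀ j, ¬(leLF (R j) 0).1
  simp only [leLF_zero_left, leLFAux_mk, true_and, (leLFAux_true_false _).2]

theorem zero_lf_mk : 0 ⧏ mk l r L R ↔ ∃ i, 0 ≤ L i := by
  show ¬(leLF (mk l r L R) 0).1 ↔ ∃ i, (leLF 0 (L i)).1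
  simp only [leLF_mk_zero, leLF_zero_left, not_forall, (leLFAux_true_false _).1]

end SetTheory.PGame

namespace MixedDeletion

def completeEdges (V : Finset ℕ) : Finset (Sym2 ℕ) := V.sym2.filter (fun e => ¬ e.IsDiag)

section Degree

variable {E : Finset (Sym2 ℕ)} {e : Sym2 ℕ} {v : ℕ}

theorem deg_erase_of_mem (he : e ∈ E) (hv : v ∈ e) : deg (E.erase e) v = deg E v - 1 := by
  rw [deg, Finset.filter_erase, Finset.card_erase_of_mem (Finset.mem_filter.2 ⟨he, hv⟩), deg]

theorem pred_deg_le_deg_erase : deg E v - 1 ≤ deg (E.erase e) v := by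
  simp only [deg, Finset.filter_erase]
  exact Finset.pred_card_le_card_erase

end Degree

section Complete

variable {V : Finset ℕ} {e : Sym2 ℕ} {v : ℕ}

theorem mk_mem_completeEdges {a b : ℕ} : s(a, b) ∈ completeEdges V ↔ a ∈ V ∧ b ∈ V ∧ a ≠ b := by
  simp [completeEdges, and_assoc]

theorem mem_of_mem_completeEdges (he : e ∈ completeEdges V) (hv : v ∈ e) : v ∈ V :=
  Finset.mem_sym2_iff.1 (Finset.mem_filter.1 he).1 v hv

theorem deg_completeEdges (hv : v ∈ V) : deg (completeEdges V) v = V.card - 1 := by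
  have : (completeEdges V).filter (v ∈ ·) = (V.erase v).image (s(v, ·)) := by
    ext e
    induction e using Sym2.ind with
    | _ a b =>
    simp only [Finset.mem_filter, mk_mem_completeEdges, Finset.mem_image, Finset.mem_erase,
      Sym2.mem_iff, Sym2.eq_iff]
    grind
  rw [deg, this, Finset.card_image_of_injective _ (fun _ _ => Sym2.congr_right.1),
    Finset.card_erase_of_mem hv]

theorem card_sub_two_le_deg_completeEdges_erase (hv : v ∈ V) :
    V.card - 2 ≤ deg ((completeEdges V).erase e) v := by
  have := pred_deg_le_deg_erase (E := completeEdges V) (e := e) (v := v)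
  rw [deg_completeEdges hv] at this
  omega

theorem filter_notMem_completeEdges :
    (completeEdges V).filter (v ∉ ·) = completeEdges (V.erase v) := by
  ext e
  induction e using Sym2.ind with
  | _ a b =>
  simp only [Finset.mem_filter, mk_mem_completeEdges, Finset.mem_erase, Sym2.mem_iff]
  grind

theorem noIsol_completeEdges (hV : 2 ≤ V.card) : NoIsol V (completeEdges V) := fun v hv => by
  rw [deg_completeEdges hv]
  omega

theorem noIsol_completeEdges_erase (hV : 3 ≤ V.card) : NoIsol V ((completeEdges V).erase e) :=
  fun v hv => by
  have := card_sub_two_le_deg_completeEdges_erase (e := e) hv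
  omega

theorem filter_notMem_erase_completeEdges (hv : v ∈ e) :
    ((completeEdges V).erase e).filter (v ∉ ·) = completeEdges (V.erase v) := by
  rw [Finset.filter_erase, filter_notMem_completeEdges, Finset.erase_eq_of_notMem]
  exact fun he => by simpa using mem_of_mem_completeEdges he hv

theorem exists_mem_mem_of_card_eq_three (hV : V.card = 3) {e' : Sym2 ℕ}
    (he : e ∈ completeEdges V) (he' : e' ∈ completeEdges V) : ∃ x, x ∈ e ∧ x ∈ e' := by
  induction e using Sym2.ind with | _ a b =>
  induction e' using Sym2.ind with | _ p q =>
  obtain ⟨x, y, z, hxy, hxz, hyz, rfl⟩ := Finset.card_eq_three.1 hV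
  simp only [mk_mem_completeEdges, Finset.mem_insert, Finset.mem_singleton] at he he'
  simp only [Sym2.mem_iff]
  by_cases hp : p = a ∨ p = b
  · exact ⟨p, hp, Or.inl rfl⟩
  by_cases hq : q = a ∨ q = b
  · exact ⟨q, hq, Or.inr rfl⟩
  omega

end Complete

section Game

variable {V : Finset ℕ} {E : Finset (Sym2 ℕ)}

theorem zero_le_flG_iff : 0 ≤ flG V E ↔ ∀ e, RightOK V E e → 0 ⧏ flG V (E.erase e) := by
  rw [flG, zero_le_mk, Subtype.forall]

theorem zero_lf_flG_of_leftOK {v : ℕ} (hv : LeftOK V E v) (hleaf : deg E v ≠ 1)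
    (h : 0 ≤ flG (V.erase v) (E.filter (v ∉ ·))) : 0 ⧏ flG V E := by
  rw [flG, zero_lf_mk]
  exact ⟨⟨v, hv, hleaf⟩, h⟩

theorem zero_le_flG_completeEdges_erase_of_card_eq_three (hV : V.card = 3) {e : Sym2 ℕ}
    (he : e ∈ completeEdges V) : 0 ≤ flG V ((completeEdges V).erase e) := by
  rw [zero_le_flG_iff]
  rintro e' ⟨he', hnoIsol⟩
  obtain ⟨hne, he'⟩ := Finset.mem_erase.1 he'
  obtain ⟨x, hxe, hxe'⟩ := exists_mem_mem_of_card_eq_three hV he he'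
  have hxV := mem_of_mem_completeEdges he hxe
  have := hnoIsol x hxV
  rw [deg_erase_of_mem (Finset.mem_erase.2 ⟨hne, he'⟩) hxe', deg_erase_of_mem he hxe,
    deg_completeEdges hxV, hV] at this
  omega

theorem zero_lf_flG_completeEdges_erase_of_card_eq_four (hV : V.card = 4) {a b : ℕ}
    (he : s(a, b) ∈ completeEdges V) : 0 ⧏ flG V ((completeEdges V).erase s(a, b)) := by
  obtain ⟨haV, hbV, hab⟩ := mk_mem_completeEdges.1 he
  obtain ⟨c, hc⟩ : ((V.erase a).erase b).Nonempty := by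
    rw [← Finset.card_pos, Finset.card_erase_of_mem (Finset.mem_erase.2 ⟨hab.symm, hbV⟩),
      Finset.card_erase_of_mem haV]
    omega
  obtain ⟨hcb, hca, hcV⟩ := by simpa only [Finset.mem_erase] using hc
  have hV' : (V.erase c).card = 3 := by rw [Finset.card_erase_of_mem hcV]; omega
  have hdel : ((completeEdges V).erase s(a, b)).filter (c ∉ ·) =
      (completeEdges (V.erase c)).erase s(a, b) := by
    rw [Finset.filter_erase, filter_notMem_completeEdges]
  refine zero_lf_flG_of_leftOK ⟨hcV, ?_⟩ ?_ ?_
  · rw [hdel]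
    exact noIsol_completeEdges_erase hV'.ge
  · have := card_sub_two_le_deg_completeEdges_erase (e := s(a, b)) hcV
    omega
  · rw [hdel]
    exact zero_le_flG_completeEdges_erase_of_card_eq_three hV' (mk_mem_completeEdges.2
      ⟨Finset.mem_erase.2 ⟨Ne.symm hca, haV⟩, Finset.mem_erase.2 ⟨Ne.symm hcb, hbV⟩, hab⟩)

theorem zero_le_flG_completeEdges (hV : 4 ≤ V.card) : 0 ≤ flG V (completeEdges V) := by
  induction V using Finset.strongInduction with | H V ih =>
  rw [zero_le_flG_iff]
  rintro e ⟨he, -⟩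
  induction e using Sym2.ind with | _ a b =>
  rcases hV.eq_or_lt with h4 | h5
  · exact zero_lf_flG_completeEdges_erase_of_card_eq_four h4.symm he
  have haV := mem_of_mem_completeEdges he (Sym2.mem_mk_left a b)
  have hdel := filter_notMem_erase_completeEdges (V := V) (Sym2.mem_mk_left a b)
  have hV' : 4 ≤ (V.erase a).card := by rw [Finset.card_erase_of_mem haV]; omega
  refine zero_lf_flG_of_leftOK ⟨haV, ?_⟩ ?_ ?_
  · rw [hdel]
    exact noIsol_completeEdges (by omega)
  · have := card_sub_two_le_deg_completeEdges_erase (e := s(a, b)) haV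
    omega
  · rw [hdel]
    exact ih _ (Finset.erase_ssubset haV) hV'

theorem zero_lf_flG_completeEdges (hV : 5 ≤ V.card) : 0 ⧏ flG V (completeEdges V) := by
  obtain ⟨v, hv⟩ := Finset.card_pos.1 (by omega : 0 < V.card)
  have hV' : 4 ≤ (V.erase v).card := by rw [Finset.card_erase_of_mem hv]; omega
  refine zero_lf_flG_of_leftOK ⟨hv, ?_⟩ ?_ ?_
  · rw [filter_notMem_completeEdges]
    exact noIsol_completeEdges (by omega)
  · rw [deg_completeEdges hv]
    omega
  · rw [filter_notMem_completeEdges]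
    exact zero_le_flG_completeEdges hV'

end Game

/-- For every `n ≥ 5`, Left wins the Forbidden Leaf Variant on the complete graph
`K_n` regardless of which player moves first. -/
theorem fl_complete_left_wins : ∀ n : ℕ, 5 ≤ n → 0 < flComplete n := by
  intro n hn
  have hcard : (Finset.range n).card = n := Finset.card_range n
  exact ⟨zero_le_flG_completeEdges (by omega), zero_lf_flG_completeEdges (by omega)⟩

end MixedDeletion
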